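/- In any Minkowski space, if a convex body K satisfies R(K) + r(K) = D(K), then every incenter of K is also a circumcenter of K. -/

import Mathlib

open Set Pointwise

/-- `V n` is `ℝ^n` (as a Euclidean space, also used as carrier for general
Minkowski spaces whose unit ball `B` is given as a set). -/
abbrev V (n : ℕ) := EuclideanSpace ℝ (Fin n)

/-- A convex body: compact, convex, with nonempty interior. -/
def IsConvexBody {n : ℕ} (K : Set (V n)) : Prop :=
  Convex ℝ K ∧ IsCompact K ∧ (interior K).Nonempty

/-- A (centrally) symmetric unit ball of a norm. -/
def IsSymUnitBall {n : ℕ} (B : Set (V n)) : Prop :=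
  IsConvexBody B ∧ B = -B

/-- Circumradius of `K` with respect to the unit ball `B`. -/
noncomputable def circum {n : ℕ} (B K : Set (V n)) : ℝ :=
  sInf {ρ : ℝ | 0 < ρ ∧ ∃ c : V n, K ⊆ c +ᵥ ρ • B}

/-- Inradius of `K` with respect to the unit ball `B`. -/
noncomputable def inrad {n : ℕ} (B K : Set (V n)) : ℝ :=
  sSup {ρ : ℝ | 0 < ρ ∧ ∃ c : V n, c +ᵥ ρ • B ⊆ K}

/-- Diameter of `K` in the norm with unit ball `B` (via the Minkowski gauge). -/
noncomputable def mdiam {n : ℕ} (B K : Set (V n)) : ℝ :=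
  sSup {d : ℝ | ∃ x ∈ K, ∃ y ∈ K, d = gauge B (x - y)}

/-- Minkowski asymmetry of `K`. -/
noncomputable def asym {n : ℕ} (K : Set (V n)) : ℝ :=
  sInf {ρ : ℝ | 0 < ρ ∧ ∃ c : V n, -K ⊆ c +ᵥ ρ • K}

/-- `K` is complete (diametrically maximal) w.r.t. the unit ball `B`. -/
def IsCompleteBody {n : ℕ} (B K : Set (V n)) : Prop :=
  IsConvexBody K ∧ ∀ x : V n, x ∉ K → mdiam B K < mdiam B (K ∪ {x})

/-- `Kstar` is a completion of `K` w.r.t. the unit ball `B`. -/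
def IsCompletionOf {n : ℕ} (B Kstar K : Set (V n)) : Prop :=
  IsCompleteBody B Kstar ∧ K ⊆ Kstar ∧ mdiam B Kstar = mdiam B K

/-- Jung ratio `R(K)/D(K)`. -/
noncomputable def jungRatio {n : ℕ} (B K : Set (V n)) : ℝ :=
  circum B K / mdiam B K

/-- Jung constant of the Minkowski space with unit ball `B`. -/
noncomputable def jungConst {n : ℕ} (B : Set (V n)) : ℝ :=
  sSup {j : ℝ | ∃ K : Set (V n), IsConvexBody K ∧ j = jungRatio B K}

/-- Maximal Minkowski asymmetry over complete bodies. -/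
noncomputable def asymConst {n : ℕ} (B : Set (V n)) : ℝ :=
  sSup {s : ℝ | ∃ K : Set (V n), IsCompleteBody B K ∧ s = asym K}

/-- Banach–Mazur distance between `K` and `C`. -/
noncomputable def dBM {n : ℕ} (K C : Set (V n)) : ℝ :=
  sInf {ρ : ℝ | 0 < ρ ∧ ∃ (A : (V n) ≃ᵃ[ℝ] (V n)) (x : V n),
    K ⊆ A '' C ∧ A '' C ⊆ x +ᵥ ρ • K}

/-- `S` is a `k`-dimensional simplex. -/
def IsSimplexDim {n : ℕ} (k : ℕ) (S : Set (V n)) : Prop :=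
  ∃ v : Fin (k + 1) → V n, AffineIndependent ℝ v ∧ S = convexHull ℝ (Set.range v)

/-- Helly property with parameter `k` for translates of `B`. -/
def HellyProp {n : ℕ} (B : Set (V n)) (k : ℕ) : Prop :=
  ∀ X : Set (V n), X.Nonempty →
    (∀ J : Finset (V n), ↑J ⊆ X → J.card ≤ k + 1 →
      (⋂ x ∈ (J : Set (V n)), (x +ᵥ B)).Nonempty) →
    (⋂ x ∈ X, (x +ᵥ B)).Nonempty

/-- Helly dimension of `B`: the least positive `k` with the Helly property. -/
noncomputable def hellyDim {n : ℕ} (B : Set (V n)) : ℕ :=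
  sInf {k : ℕ | 0 < k ∧ HellyProp B k}

/-- `K` is of constant width w.r.t. the unit ball `B`: `K - K` is a dilate of `B`. -/
def IsConstWidth {n : ℕ} (B K : Set (V n)) : Prop :=
  ∃ γ : ℝ, 0 < γ ∧ K - K = γ • B

/-- A regular `n`-simplex in Euclidean space. -/
def IsRegularSimplex {n : ℕ} (T : Set (V n)) : Prop :=
  ∃ v : Fin (n + 1) → V n, AffineIndependent ℝ v ∧
    (∀ i j k l, i ≠ j → k ≠ l → dist (v i) (v j) = dist (v k) (v l)) ∧
    T = convexHull ℝ (Set.range v)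

/-- The Euclidean unit ball in `ℝ^n`. -/
noncomputable def euclBall (n : ℕ) : Set (V n) := Metric.closedBall 0 1

/-- Pseudo completion of `K` with respect to the circumcenter `c`. -/
noncomputable def pseudoCompletion {n : ℕ} (B K : Set (V n)) (c : V n) : Set (V n) :=
  convexHull ℝ (K ∪ (c +ᵥ (mdiam B K - circum B K) • B))

/-!
Write `‖·‖` for the norm with unit ball `B`. For `x ∈ K` and an incenter `c`, the point
`y = c - r (x - c) / ‖x - c‖` of the inball lies on the ray from `x` through `c`, so
`‖x - c‖ + r = ‖x - y‖ ≤ D = R + r`, that is, `‖x - c‖ ≤ R`.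
-/

open Topology

theorem mem_smul_of_gauge_le {E : Type*} [NormedAddCommGroup E] [NormedSpace ℝ E] {s : Set E}
    (hc : Convex ℝ s) (hs₀ : s ∈ 𝓝 0) (hcl : IsClosed s) (hb : Bornology.IsBounded s)
    {a : ℝ} {x : E} (ha : 0 ≤ a) (hx : gauge s x ≤ a) : x ∈ a • s := by
  obtain rfl | ha := ha.eq_or_lt
  · have hx0 : x = 0 :=
      (gauge_eq_zero (absorbent_nhds_zero hs₀) ((NormedSpace.isVonNBounded_iff ℝ).2 hb)).1
        (le_antisymm hx (gauge_nonneg x))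
    rw [hx0, zero_smul_set (nonempty_of_mem (mem_of_mem_nhds hs₀))]
    rfl
  · rw [mem_smul_set_iff_inv_smul_mem₀ ha.ne', ← hcl.closure_eq,
      ← gauge_le_one_iff_mem_closure hc hs₀, gauge_smul_of_nonneg (inv_nonneg.2 ha.le),
      smul_eq_mul, inv_mul_le_iff₀ ha, mul_one]
    exact hx

namespace IsSymUnitBall

variable {n : ℕ} {B : Set (V n)}

theorem neg_mem (hB : IsSymUnitBall B) {x : V n} (hx : x ∈ B) : -x ∈ B := by
  rw [hB.2]
  simpa using hx

theorem zero_mem_interior (hB : IsSymUnitBall B) : (0 : V n) ∈ interior B := by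
  obtain ⟨b, hb⟩ := hB.1.2.2
  have hnb : -b ∈ interior B := by
    rw [hB.2]
    exact ((Homeomorph.neg (V n)).preimage_interior B).symm ▸ (by simpa using hb)
  have half : (0 : ℝ) ≤ 1 / 2 := by norm_num
  simpa using hB.1.1.interior hb hnb half half (by norm_num)

theorem mem_nhds_zero (hB : IsSymUnitBall B) : B ∈ 𝓝 (0 : V n) :=
  mem_interior_iff_mem_nhds.1 hB.zero_mem_interior

theorem mem_smul_of_gauge_le (hB : IsSymUnitBall B) {a : ℝ} {x : V n} (ha : 0 ≤ a)
    (hx : gauge B x ≤ a) : x ∈ a • B :=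
  _root_.mem_smul_of_gauge_le hB.1.1 hB.mem_nhds_zero hB.1.2.1.isClosed hB.1.2.1.isBounded ha hx

end IsSymUnitBall

theorem gauge_sub_le_mdiam {n : ℕ} {B K : Set (V n)} (hB : Convex ℝ B) (hB₀ : B ∈ 𝓝 0)
    (hK : IsCompact K) {x y : V n} (hx : x ∈ K) (hy : y ∈ K) : gauge B (x - y) ≤ mdiam B K := by
  have hbdd : BddAbove ((fun p : V n × V n => gauge B (p.1 - p.2)) '' K ×ˢ K) :=
    (hK.prod hK).bddAbove_image ((continuous_gauge hB hB₀).comp continuous_sub).continuousOn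
  refine le_csSup (hbdd.mono ?_) ⟨x, hx, y, hy, rfl⟩
  rintro d ⟨p, hp, q, hq, rfl⟩
  exact ⟨(p, q), ⟨hp, hq⟩, rfl⟩

theorem gauge_sub_add_le_mdiam {n : ℕ} {B K : Set (V n)} (hB : IsSymUnitBall B)
    (hK : IsCompact K) {c x : V n} {r : ℝ} (hr : 0 ≤ r) (hc : c +ᵥ r • B ⊆ K) (hx : x ∈ K)
    (hxc : 0 < gauge B (x - c)) : gauge B (x - c) + r ≤ mdiam B K := by
  set t := gauge B (x - c) with ht
  set y := c - (r / t) • (x - c)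
  have hy : y ∈ K := by
    refine hc ⟨-((r / t) • (x - c)), hB.mem_smul_of_gauge_le hr (le_of_eq ?_), by
      simp [y, sub_eq_add_neg]⟩
    rw [gauge_neg (fun _ => hB.neg_mem), gauge_smul_of_nonneg (by positivity), smul_eq_mul, ← ht]
    field_simp
  have hxy : gauge B (x - y) = t + r := by
    rw [show x - y = (1 + r / t) • (x - c) by module, gauge_smul_of_nonneg (by positivity),
      smul_eq_mul, ← ht]
    field_simp
  rw [← hxy]
  exact gauge_sub_le_mdiam hB.1.1 hB.mem_nhds_zero hK hx hy

/-- If `R(K) + r(K) = D(K)`, every incenter of `K` is also a circumcenter. -/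
theorem stmt3 {n : ℕ} (B K : Set (V n)) (hB : IsSymUnitBall B)
    (hK : IsConvexBody K)
    (heq : circum B K + inrad B K = mdiam B K) :
    ∀ c : V n, c +ᵥ inrad B K • B ⊆ K → K ⊆ c +ᵥ circum B K • B := by
  intro c hc x hx
  have hR : 0 ≤ circum B K := Real.sInf_nonneg fun ρ hρ => hρ.1.le
  have hr : 0 ≤ inrad B K := Real.sSup_nonneg fun ρ hρ => hρ.1.le
  rw [mem_vadd_set_iff_neg_vadd_mem, vadd_eq_add, neg_add_eq_sub]
  refine hB.mem_smul_of_gauge_le hR ?_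
  rcases (gauge_nonneg (x - c)).eq_or_lt with hxc | hxc
  · exact hxc ▸ hR
  · linarith [gauge_sub_add_le_mdiam hB hK.2.1 hr hc hx hxc]
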